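/- Let dih(x1,x4) denote the dihedral angle along the first edge of the simplex with squared edge lengths (x1, 4, 4, x4, 4, 4), i.e., second, third, fifth, sixth edges of length 2. For x1, x4 ∈ [4, 2.51²] with dih > π/2, one has cos(dih) ≥ 1 − 2x4/(16 − x1) ≥ −29003/96999. -/
import Mathlib


noncomputable section

def ufun (a b c : ℝ) : ℝ := -a^2 - b^2 - c^2 + 2*a*b + 2*a*c + 2*b*c

/-- The partial derivative ∂Δ/∂x4 of the Cayley–Menger-type polynomial Δ. -/
def deltaX4 (x1 x2 x3 x4 x5 x6 : ℝ) : ℝ :=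
  x1*(-x1+x2+x3-x4+x5+x6) - x1*x4 + x2*x5 + x3*x6 - x2*x3 - x5*x6

/-- The dihedral angle along the first edge of the simplex with squared edge
lengths (x1, 4, 4, x4, 4, 4), via cos(dih) = (∂Δ/∂x4)/√(u(x1,x2,x6)u(x1,x3,x5)). -/
def dih (x1 x4 : ℝ) : ℝ :=
  Real.arccos (deltaX4 x1 4 4 x4 4 4 / Real.sqrt (ufun x1 4 4 * ufun x1 4 4))

/-- For x1, x4 ∈ [4, 2.51²] with dih > π/2, one has
cos(dih) ≥ 1 − 2x4/(16 − x1) ≥ −29003/96999. -/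
theorem cos_dih_lower_bound
    (x1 x4 : ℝ) (h1 : x1 ∈ Set.Icc (4:ℝ) (2.51^2)) (h4 : x4 ∈ Set.Icc (4:ℝ) (2.51^2))
    (hdih : Real.pi / 2 < dih x1 x4) :
    1 - 2*x4/(16 - x1) ≤ Real.cos (dih x1 x4) ∧
      (-29003/96999 : ℝ) ≤ 1 - 2*x4/(16 - x1) := by
  obtain ⟨a1, b1⟩ := h1
  obtain ⟨a4, b4⟩ := h4
  norm_num at b1 b4
  have h16 : (0:ℝ) < 16 - x1 := by linarith
  have hx1 : x1 ≠ 0 := by positivity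
  have hne : (16 - x1) ≠ 0 := ne_of_gt h16
  have hupos : (0:ℝ) < ufun x1 4 4 := by unfold ufun; nlinarith
  have hu : ufun x1 4 4 = x1 * (16 - x1) := by unfold ufun; ring
  have ht : deltaX4 x1 4 4 x4 4 4 / Real.sqrt (ufun x1 4 4 * ufun x1 4 4)
      = 1 - 2*x4/(16 - x1) := by
    rw [Real.sqrt_mul_self hupos.le, hu]
    unfold deltaX4
    field_simp
    ring
  have h2 : 2*x4/(16 - x1) ≤ 2 := (div_le_iff₀ h16).mpr (by linarith)
  have hlo : (-1:ℝ) ≤ 1 - 2*x4/(16 - x1) := by linarith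
  have hhi : 1 - 2*x4/(16 - x1) ≤ 1 := by
    have : 0 ≤ 2*x4/(16 - x1) := by positivity
    linarith
  refine ⟨?_, ?_⟩
  · unfold dih
    rw [ht, Real.cos_arccos hlo hhi]
  · have h3 : 2*x4/(16 - x1) ≤ 126002/96999 := (div_le_iff₀ h16).mpr (by nlinarith)
    linarith
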